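/- Let m ≥ 1 and let B be an m×m matrix over F₂. If the digital net generated by (I, B) is a (0,m,2)-net over F₂, then for every 1 ≤ k ≤ m the upper-left k×k submatrix of B·J_m is invertible over F₂ (equivalently, all leading principal minors of B·J_m are nonzero). -/
import Mathlib


open Matrix

/-- The vector of binary digits of `l` (least significant first). -/
def digitsVec (m l : ℕ) : Fin m → ZMod 2 := fun k => if l.testBit k.val then 1 else 0

/-- The map φ sending a bit vector to a real number in [0,1). -/
noncomputable def phiMap (m : ℕ) (y : Fin m → ZMod 2) : ℝ :=
  ∑ k : Fin m, ((y k).val : ℝ) / 2 ^ (k.val + 1)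

/-- The digital net (as a multiset of `2^m` points in `[0,1)^s`) generated by
matrices `C 0, …, C (s-1)`. -/
noncomputable def digitalNet (m s : ℕ) (C : Fin s → Matrix (Fin m) (Fin m) (ZMod 2)) :
    Multiset (Fin s → ℝ) :=
  (Multiset.range (2 ^ m)).map fun l => fun j => phiMap m ((C j).mulVec (digitsVec m l))

open Classical in
/-- `P` is a `(t,m,s)`-net over `F₂`: every elementary interval of volume `2^{t-m}`
contains exactly `2^t` points of `P`, counted with multiplicity. -/
def IsNet (t m s : ℕ) (P : Multiset (Fin s → ℝ)) : Prop :=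
  ∀ d : Fin s → ℕ, (∑ i, d i) = m - t →
    ∀ a : Fin s → ℕ, (∀ i, a i < 2 ^ d i) →
      (P.countP fun x => ∀ i,
        ((a i : ℝ) / 2 ^ d i ≤ x i ∧ x i < ((a i : ℝ) + 1) / 2 ^ d i)) = 2 ^ t

/-- The anti-diagonal matrix `J_m` over `F₂`. -/
def Jmat (m : ℕ) : Matrix (Fin m) (Fin m) (ZMod 2) :=
  Matrix.of fun i j => if i.val + j.val = m - 1 then 1 else 0

/-- The upper-triangular Pascal matrix `P_m` over `F₂` (0-indexed entry `(i,j)` is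
`binom(j,i) mod 2`). -/
def Pmat (m : ℕ) : Matrix (Fin m) (Fin m) (ZMod 2) :=
  Matrix.of fun i j => ((j.val.choose i.val : ℕ) : ZMod 2)

/-- A matrix is lower triangular. -/
def IsLowerTri {m : ℕ} (L : Matrix (Fin m) (Fin m) (ZMod 2)) : Prop :=
  ∀ i j : Fin m, i < j → L i j = 0

section Helpers

lemma testBit_bitsum : ∀ (k m : ℕ) (g : ℕ → ℕ), (∀ t, g t ≤ 1) → k < m →
    (∑ t ∈ Finset.range m, g t * 2 ^ t).testBit k = decide (g k = 1) := by
  intro k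
  induction k with
  | zero =>
    intro m g hg hk
    obtain ⟨n, rfl⟩ : ∃ n, m = n + 1 := ⟨m - 1, by omega⟩
    rw [Finset.sum_range_succ' (fun t => g t * 2 ^ t) n]
    have h2 : ∑ t ∈ Finset.range n, g (t + 1) * 2 ^ (t + 1)
        = 2 * ∑ t ∈ Finset.range n, g (t + 1) * 2 ^ t := by
      rw [Finset.mul_sum]; apply Finset.sum_congr rfl; intro t _; ring
    rw [h2, Nat.testBit_zero]
    have h0 := hg 0
    congr 1
    simp only [pow_zero, mul_one]
    rw [Nat.mul_add_mod, Nat.mod_eq_of_lt (by omega : g 0 < 2)]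
  | succ k ih =>
    intro m g hg hk
    obtain ⟨n, rfl⟩ : ∃ n, m = n + 1 := ⟨m - 1, by omega⟩
    rw [Finset.sum_range_succ' (fun t => g t * 2 ^ t) n]
    have h2 : ∑ t ∈ Finset.range n, g (t + 1) * 2 ^ (t + 1)
        = 2 * ∑ t ∈ Finset.range n, g (t + 1) * 2 ^ t := by
      rw [Finset.mul_sum]; apply Finset.sum_congr rfl; intro t _; ring
    rw [h2, Nat.testBit_succ]
    have h0 := hg 0
    have hdiv : (2 * ∑ t ∈ Finset.range n, g (t + 1) * 2 ^ t + g 0 * 2 ^ 0) / 2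
        = ∑ t ∈ Finset.range n, g (t + 1) * 2 ^ t := by
      simp only [pow_zero, mul_one]
      omega
    rw [hdiv]
    exact ih n (fun t => g (t + 1)) (fun t => hg _) (by omega)

lemma bitsum_lt (m : ℕ) (g : ℕ → ℕ) (hg : ∀ t, g t ≤ 1) :
    ∑ t ∈ Finset.range m, g t * 2 ^ t < 2 ^ m := by
  induction m with
  | zero => simp
  | succ n ih =>
    rw [Finset.sum_range_succ]
    have h1 := hg n
    have h2 : g n * 2 ^ n ≤ 2 ^ n := by
      calc g n * 2 ^ n ≤ 1 * 2 ^ n := Nat.mul_le_mul_right _ h1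
        _ = 2 ^ n := one_mul _
    have h3 : (2:ℕ) ^ (n+1) = 2 ^ n + 2 ^ n := by ring
    omega

lemma geo_bound (d : ℕ) : ∀ n, d ≤ n →
    ∑ i ∈ Finset.Ico d n, ((2:ℝ))⁻¹ ^ (i + 1) ≤ (2:ℝ)⁻¹ ^ d - (2:ℝ)⁻¹ ^ n := by
  intro n
  induction n with
  | zero => intro h; interval_cases d; simp
  | succ n ih =>
    intro h
    rcases Nat.lt_or_ge d (n+1) with h' | h'
    · have hd : d ≤ n := by omega
      rw [Finset.sum_Ico_succ_top hd]
      have h4 : (2:ℝ)⁻¹ ^ (n + 1) = (2:ℝ)⁻¹ ^ n * 2⁻¹ := by rw [pow_succ]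
      nlinarith [ih hd]
    · have : d = n + 1 := by omega
      subst this; simp

lemma phiMap_nonneg (m : ℕ) (y : Fin m → ZMod 2) : 0 ≤ phiMap m y := by
  apply Finset.sum_nonneg
  intro i _
  positivity

lemma phiMap_lt (m d : ℕ) (hd : d ≤ m) (y : Fin m → ZMod 2)
    (h : ∀ i : Fin m, i.val < d → y i = 0) : phiMap m y < 1 / 2 ^ d := by
  set F : ℕ → ℝ := fun i => if h : i < m then ((y ⟨i, h⟩).val : ℝ) / 2 ^ (i + 1) else 0 with hF
  have hphi : phiMap m y = ∑ i ∈ Finset.range m, F i := by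
    rw [phiMap, ← Fin.sum_univ_eq_sum_range]
    apply Finset.sum_congr rfl
    intro i _
    simp [hF, i.isLt]
  have hsub : ∑ i ∈ Finset.range m, F i = ∑ i ∈ Finset.Ico d m, F i := by
    rw [← Nat.Ico_zero_eq_range]
    rw [← Finset.sum_Ico_consecutive _ (Nat.zero_le d) hd]
    have : ∑ i ∈ Finset.Ico 0 d, F i = 0 := by
      apply Finset.sum_eq_zero
      intro i hi
      simp only [Finset.mem_Ico] at hi
      have him : i < m := by omega
      simp only [hF, dif_pos him]
      rw [h ⟨i, him⟩ hi.2]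
      simp
    rw [this, zero_add]
  have hle : ∑ i ∈ Finset.Ico d m, F i ≤ ∑ i ∈ Finset.Ico d m, ((2:ℝ))⁻¹ ^ (i + 1) := by
    apply Finset.sum_le_sum
    intro i hi
    simp only [Finset.mem_Ico] at hi
    simp only [hF, dif_pos hi.2]
    rw [div_eq_mul_inv, ← inv_pow]
    have hv : ((y ⟨i, hi.2⟩).val : ℝ) ≤ 1 := by
      have := (y ⟨i, hi.2⟩).val_lt
      exact_mod_cast Nat.lt_succ_iff.mp this
    nlinarith [pow_pos (by norm_num : (0:ℝ) < 2⁻¹) (i+1)]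
  have hgeo := geo_bound d m hd
  have hpos : (0:ℝ) < (2:ℝ)⁻¹ ^ m := by positivity
  have : (2:ℝ)⁻¹ ^ d = 1 / 2 ^ d := by rw [inv_pow]; ring
  rw [hphi, hsub]
  linarith

lemma phiMap_ge (m d : ℕ) (y : Fin m → ZMod 2) (i : Fin m) (hi : i.val < d)
    (hyi : y i ≠ 0) : 1 / 2 ^ d ≤ phiMap m y := by
  have h1 : (y i).val = 1 := by
    have h2 := (y i).val_lt
    have h3 : (y i).val ≠ 0 := fun h => hyi (by rwa [← ZMod.val_eq_zero])
    omega
  calc (1:ℝ) / 2 ^ d ≤ ((y i).val : ℝ) / 2 ^ (i.val + 1) := by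
        rw [h1]
        push_cast
        apply div_le_div_of_nonneg_left (by norm_num) (by positivity)
        exact pow_le_pow_right₀ (by norm_num) (by omega)
    _ ≤ phiMap m y := by
        apply Finset.single_le_sum (f := fun k : Fin m => ((y k).val : ℝ) / 2 ^ (k.val + 1))
        · intro j _; positivity
        · exact Finset.mem_univ i

end Helpers

theorem stmt11 (m : ℕ) (hm : 1 ≤ m) (B : Matrix (Fin m) (Fin m) (ZMod 2))
    (hnet : IsNet 0 m 2 (digitalNet m 2 ![1, B])) :
    ∀ k : ℕ, 1 ≤ k → ∀ hk : k ≤ m,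
      IsUnit ((B * Jmat m).submatrix (Fin.castLE hk) (Fin.castLE hk)) := by
  classical
  intro k hk1 hk
  by_contra hM
  set M := (B * Jmat m).submatrix (Fin.castLE hk) (Fin.castLE hk) with hMdef
  have hdet : M.det = 0 := by
    by_contra hd
    exact hM ((Matrix.isUnit_iff_isUnit_det M).mpr (isUnit_iff_ne_zero.mpr hd))
  obtain ⟨c, hc0, hcker⟩ := Matrix.exists_mulVec_eq_zero_iff.mpr hdet
  -- the embedding e : Fin k → Fin m, j ↦ m - 1 - j
  have hklt : ∀ j : Fin k, m - 1 - j.val < m := fun j => by omega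
  set e : Fin k → Fin m := fun j => ⟨m - 1 - j.val, hklt j⟩ with he
  have he_inj : Function.Injective e := by
    intro j j' h
    have h1 := j.isLt; have h2 := j'.isLt
    apply Fin.ext
    have := congrArg Fin.val h
    simp only [he] at this
    omega
  -- the kernel vector v : Fin m → ZMod 2
  set v : Fin m → ZMod 2 :=
    fun t => if h : m - k ≤ t.val then c ⟨m - 1 - t.val, by omega⟩ else 0 with hv
  have hv_low : ∀ t : Fin m, t.val < m - k → v t = 0 := by
    intro t ht
    simp only [hv, dif_neg (by omega : ¬ m - k ≤ t.val)]
  have hv_e : ∀ j : Fin k, v (e j) = c j := by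
    intro j
    have h1 := j.isLt
    simp only [hv, he, dif_pos (by omega : m - k ≤ m - 1 - j.val)]
    congr 1
    apply Fin.ext
    simp only
    omega
  -- key computation : B.mulVec v agrees with M.mulVec c on the first k rows
  have key : ∀ i : Fin m, B.mulVec v i = ∑ j : Fin k, B i (e j) * c j := by
    intro i
    have h0 : B.mulVec v i = ∑ t : Fin m, B i t * v t := by
      simp [Matrix.mulVec, dotProduct]
    rw [h0]
    have himg : ∑ t ∈ Finset.univ.image e, B i t * v t = ∑ t : Fin m, B i t * v t := by
      apply Finset.sum_subset (Finset.subset_univ _)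
      intro t _ ht
      have : v t = 0 := by
        rcases Nat.lt_or_ge t.val (m - k) with h' | h'
        · exact hv_low t h'
        · exfalso
          apply ht
          apply Finset.mem_image.mpr
          refine ⟨⟨m - 1 - t.val, by omega⟩, Finset.mem_univ _, ?_⟩
          apply Fin.ext
          simp only [he]
          omega
      rw [this, mul_zero]
    rw [← himg, Finset.sum_image (fun x _ y _ h => he_inj h)]
    apply Finset.sum_congr rfl
    intro j _
    rw [hv_e j]
  -- M.mulVec c in explicit form
  have hMentry : ∀ (i' j : Fin k), M i' j = B (Fin.castLE hk i') (e j) := by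
    intro i' j
    have hj := j.isLt
    simp only [hMdef, Matrix.submatrix_apply, Matrix.mul_apply, Jmat, Matrix.of_apply]
    rw [Finset.sum_eq_single_of_mem (e j) (Finset.mem_univ _)]
    · simp only [he, Fin.coe_castLE]
      rw [if_pos (by omega : m - 1 - j.val + j.val = m - 1), mul_one]
    · intro b _ hb
      rw [if_neg, mul_zero]
      intro hcontra
      apply hb
      apply Fin.ext
      simp only [he, Fin.coe_castLE] at hcontra ⊢
      omega
  have hBv : ∀ i : Fin m, i.val < k → B.mulVec v i = 0 := by
    intro i hi
    rw [key i]
    have := congrFun hcker ⟨i.val, hi⟩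
    rw [Matrix.mulVec, dotProduct] at this
    simp only [Pi.zero_apply] at this
    rw [← this]
    apply Finset.sum_congr rfl
    intro j _
    rw [hMentry ⟨i.val, hi⟩ j]
    congr 1
  -- build the natural number l' with digit vector v
  set g : ℕ → ℕ := fun t => if h : t < m then (v ⟨t, h⟩).val else 0 with hg
  have hg1 : ∀ t, g t ≤ 1 := by
    intro t
    simp only [hg]
    split
    · have := (v ⟨t, by omega⟩).val_lt; omega
    · omega
  set l' : ℕ := ∑ t ∈ Finset.range m, g t * 2 ^ t with hl'
  have hl'lt : l' < 2 ^ m := bitsum_lt m g hg1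
  have hzmod : ∀ a : ZMod 2, (a.val = 1 → a = 1) ∧ (a.val ≠ 1 → a = 0) := by decide
  have hdig : digitsVec m l' = v := by
    funext t
    have ht := t.isLt
    rw [digitsVec]
    rw [testBit_bitsum t.val m g hg1 ht]
    simp only [hg, dif_pos ht]
    by_cases hcase : (v t).val = 1
    · rw [if_pos (by simp [Fin.eta, hcase])]
      exact ((hzmod (v t)).1 hcase).symm
    · rw [if_neg (by simp [Fin.eta, hcase])]
      exact ((hzmod (v t)).2 hcase).symm
  have hvne : v ≠ 0 := by
    obtain ⟨j0, hj0⟩ := Function.ne_iff.mp hc0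
    intro hv0
    apply hj0
    have := congrFun hv0 (e j0)
    rw [hv_e j0] at this
    simpa using this
  have hl'ne : l' ≠ 0 := by
    intro h0
    apply hvne
    rw [← hdig, h0]
    funext t
    simp [digitsVec, Nat.zero_testBit]
  -- apply the net property
  set d : Fin 2 → ℕ := ![m - k, k] with hd
  have hdsum : (∑ i, d i) = m - 0 := by
    rw [Fin.sum_univ_two]
    simp only [hd, Matrix.cons_val_zero, Matrix.cons_val_one, Matrix.head_cons]
    omega
  set a : Fin 2 → ℕ := fun _ => 0 with ha
  have haa : ∀ i, a i < 2 ^ d i := fun i => pow_pos (by norm_num) _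
  have hcount := hnet d hdsum a haa
  rw [digitalNet, Multiset.countP_map] at hcount
  -- both 0 and l' lie in the filtered multiset
  set p : (Fin 2 → ℝ) → Prop := fun x => ∀ i,
      ((a i : ℝ) / 2 ^ d i ≤ x i ∧ x i < ((a i : ℝ) + 1) / 2 ^ d i) with hp
  have hd0 : d 0 = m - k := rfl
  have hd1 : d 1 = k := rfl
  have hmem : ∀ l : ℕ, (∀ i : Fin m, i.val < m - k → digitsVec m l i = 0) →
      (∀ i : Fin m, i.val < k → B.mulVec (digitsVec m l) i = 0) →
      p (fun j => phiMap m ((![1, B] j).mulVec (digitsVec m l))) := by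
    intro l h1 h2
    intro i
    fin_cases i
    · constructor
      · simp only [ha, Nat.cast_zero, zero_div]
        simpa using phiMap_nonneg m _
      · have h := phiMap_lt m (m - k) (by omega) _ h1
        simpa [ha, hd, Matrix.one_mulVec] using h
    · constructor
      · simp only [ha, Nat.cast_zero, zero_div]
        simpa using phiMap_nonneg m _
      · have h := phiMap_lt m k hk _ h2
        simpa [ha, hd] using h
  have hmem0 : p (fun j => phiMap m ((![1, B] j).mulVec (digitsVec m 0))) := by
    apply hmem
    · intro i _; simp [digitsVec, Nat.zero_testBit]
    · intro i _
      have : digitsVec m 0 = 0 := by funext t; simp [digitsVec, Nat.zero_testBit]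
      rw [this, Matrix.mulVec_zero]
      rfl
  have hmeml' : p (fun j => phiMap m ((![1, B] j).mulVec (digitsVec m l'))) := by
    apply hmem
    · intro i hi; rw [hdig]; exact hv_low i hi
    · intro i hi; rw [hdig]; exact hBv i hi
  have hsub : ({0, l'} : Multiset ℕ) ≤ Multiset.filter
      (fun l => p (fun j => phiMap m ((![1, B] j).mulVec (digitsVec m l))))
      (Multiset.range (2 ^ m)) := by
    rw [Multiset.le_iff_subset (by simp [hl'ne.symm])]
    intro x hx
    rw [Multiset.mem_filter]
    simp only [Multiset.insert_eq_cons, Multiset.mem_cons, Multiset.mem_singleton] at hx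
    rcases hx with rfl | rfl
    · exact ⟨Multiset.mem_range.mpr (pow_pos (by norm_num) m), hmem0⟩
    · exact ⟨Multiset.mem_range.mpr hl'lt, hmeml'⟩
  have h2le := Multiset.card_le_card hsub
  simp only [Multiset.insert_eq_cons, Multiset.card_cons, Multiset.card_singleton] at h2le
  rw [hcount] at h2le
  norm_num at h2le
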